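/- arXiv:2508.21241 — 3 statements merged into one kernel-verified Lean document; each statement's English description precedes it below -/
import Mathlib

section
/- Let ψ be a Möbius transformation of the Riemann sphere with ψ({0,∞}) ≠ {0,∞}, and for a, a' ∈ ℂ× with ψ(a') ∉ {0,∞}, define ψ_{a,a'}(z) = ψ(az)/ψ(a'). If (a₁, a₁') ≠ (a₂, a₂') (with all ψ(aᵢ') ∉ {0,∞}), then ψ_{a₁,a₁'} ≠ ψ_{a₂,a₂'} as Möbius transformations. -/
open OnePoint

/-- The Möbius transformation `z ↦ (az+b)/(cz+d)` as a self-map of the Riemann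
sphere `ℂ ∪ {∞}`. -/
noncomputable def mobius (a b c d : ℂ) : OnePoint ℂ → OnePoint ℂ := fun z =>
  match z with
  | ∞ => if c = 0 then ∞ else ((a / c : ℂ) : OnePoint ℂ)
  | (x : ℂ) => if c * x + d = 0 then ∞ else (((a * x + b) / (c * x + d) : ℂ) : OnePoint ℂ)

/-- Multiplication of a point of the Riemann sphere by a nonzero constant `k`
(fixing `∞`). -/
def sphereMul (k : ℂ) : OnePoint ℂ → OnePoint ℂ := fun z =>
  match z with
  | ∞ => ∞
  | (x : ℂ) => ((k * x : ℂ) : OnePoint ℂ)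

/-- Division of a point of the Riemann sphere by a nonzero constant `k`
(fixing `∞`). -/
noncomputable def sphereDivConst (z : OnePoint ℂ) (k : ℂ) : OnePoint ℂ :=
  match z with
  | ∞ => ∞
  | (x : ℂ) => ((x / k : ℂ) : OnePoint ℂ)

/-! Sphere multiplication `z ↦ a z` fixes `0` and `∞`, and the Möbius map `ψ`, being injective
and not preserving `{0, ∞}`, sends one of these two points to a finite nonzero `w`. Evaluating
`ψ_{a₁,a₁'} = ψ_{a₂,a₂'}` there gives `w / k₁ = w / k₂`, so `k₁ = k₂`; injectivity of `ψ` then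
yields `a₁ = a₂` (evaluate at `1`) and `a₁' = a₂'` (from `ψ a₁' = k₁ = k₂ = ψ a₂'`). -/

open Function

theorem exists_mem_apply_notMem_of_image_ne {α : Type*} {f : α → α} (hf : Injective f)
    {s : Set α} (hs : s.Finite) (h : f '' s ≠ s) : ∃ x ∈ s, f x ∉ s := by
  by_contra! hmaps
  exact h <| Set.eq_of_subset_of_ncard_le (Set.image_subset_iff.2 hmaps)
    (Set.ncard_image_of_injective s hf).ge hs

open Matrix in
theorem mobius_eq_smul (a b c d : ℂ) (hdet : a * d - b * c ≠ 0) :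
    mobius a b c d = (GeneralLinearGroup.mkOfDetNeZero !![a, b; c, d]
      (by simpa [det_fin_two] using hdet) • ·) := by
  funext z
  cases z with
  | infty => simp [mobius, OnePoint.smul_infty_eq_ite]
  | coe x => simp [mobius, OnePoint.smul_some_eq_ite]

theorem mobius_injective {a b c d : ℂ} (hdet : a * d - b * c ≠ 0) :
    Injective (mobius a b c d) := by
  rw [mobius_eq_smul a b c d hdet]
  exact MulAction.injective _

theorem sphereMul_of_mem_zero_infty (k : ℂ) {z : OnePoint ℂ}
    (hz : z ∈ ({((0 : ℂ) : OnePoint ℂ), ∞} : Set (OnePoint ℂ))) : sphereMul k z = z := by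
  rcases hz with rfl | rfl <;> simp [sphereMul]

theorem sphereDivConst_left_injective {k : ℂ} (hk : k ≠ 0) :
    Injective (sphereDivConst · k) := by
  intro z w h
  cases z <;> cases w <;> simp_all [sphereDivConst]

theorem sphereDivConst_right_injective {z : OnePoint ℂ}
    (hz : z ∉ ({((0 : ℂ) : OnePoint ℂ), ∞} : Set (OnePoint ℂ))) :
    Injective (sphereDivConst z) := by
  intro k₁ k₂ h
  cases z with
  | infty => simp at hz
  | coe w =>
    have hw : w ≠ 0 := by rintro rfl; simp at hz
    simpa [sphereDivConst, div_eq_mul_inv, hw] using h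

theorem mobius_family_injective_general (a b c d : ℂ) (hdet : a * d - b * c ≠ 0)
    (ψ : OnePoint ℂ → OnePoint ℂ) (hψ : ψ = mobius a b c d)
    (hfix : ψ '' {((0 : ℂ) : OnePoint ℂ), ∞} ≠ {((0 : ℂ) : OnePoint ℂ), ∞})
    (a₁ a₂ a₁' a₂' : ℂ)
    (k₁ k₂ : ℂ) (hk₁ : k₁ ≠ 0)
    (hψ₁ : ψ ((a₁' : OnePoint ℂ)) = (k₁ : OnePoint ℂ))
    (hψ₂ : ψ ((a₂' : OnePoint ℂ)) = (k₂ : OnePoint ℂ))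
    (hne : (a₁, a₁') ≠ (a₂, a₂')) :
    (fun z => sphereDivConst (ψ (sphereMul a₁ z)) k₁) ≠
      (fun z => sphereDivConst (ψ (sphereMul a₂ z)) k₂) := by
  subst hψ
  intro heq
  have hinj := mobius_injective hdet
  obtain ⟨p, hp, hψp⟩ := exists_mem_apply_notMem_of_image_ne hinj (Set.toFinite _) hfix
  have hk : k₁ = k₂ := by
    have hp_eq := congrFun heq p
    simp only [sphereMul_of_mem_zero_infty _ hp] at hp_eq
    exact sphereDivConst_right_injective hψp hp_eq
  subst hk
  have ha : a₁ = a₂ := by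
    have h1 := congrFun heq ((1 : ℂ) : OnePoint ℂ)
    simpa [sphereMul] using hinj (sphereDivConst_left_injective hk₁ h1)
  have ha' : a₁' = a₂' := OnePoint.coe_injective (hinj (hψ₁.trans hψ₂.symm))
  exact hne (by rw [ha, ha'])

/-- Let `ψ` be a Möbius transformation with `ψ({0,∞}) ≠ {0,∞}`, and
for `a ∈ ℂ×`, `a'` with `ψ(a') ∉ {0,∞}`, set `ψ_{a,a'}(z) = ψ(a z)/ψ(a')`.
If `(a₁,a₁') ≠ (a₂,a₂')` then `ψ_{a₁,a₁'} ≠ ψ_{a₂,a₂'}` as functions on the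
Riemann sphere. -/
theorem mobius_family_injective (a b c d : ℂ) (hdet : a * d - b * c ≠ 0)
    (ψ : OnePoint ℂ → OnePoint ℂ) (hψ : ψ = mobius a b c d)
    (hfix : ψ '' {((0 : ℂ) : OnePoint ℂ), ∞} ≠ {((0 : ℂ) : OnePoint ℂ), ∞})
    (a₁ a₂ a₁' a₂' : ℂ) (ha₁ : a₁ ≠ 0) (ha₂ : a₂ ≠ 0)
    (k₁ k₂ : ℂ) (hk₁ : k₁ ≠ 0) (hk₂ : k₂ ≠ 0)
    (hψ₁ : ψ ((a₁' : OnePoint ℂ)) = (k₁ : OnePoint ℂ))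
    (hψ₂ : ψ ((a₂' : OnePoint ℂ)) = (k₂ : OnePoint ℂ))
    (hne : (a₁, a₁') ≠ (a₂, a₂')) :
    (fun z => sphereDivConst (ψ (sphereMul a₁ z)) k₁) ≠
      (fun z => sphereDivConst (ψ (sphereMul a₂ z)) k₂) :=
  mobius_family_injective_general a b c d hdet ψ hψ hfix a₁ a₂ a₁' a₂' k₁ k₂ hk₁ hψ₁ hψ₂ hne
end

section
/- Let A₁, A₂, A₃ be nonempty finite subsets of ℂ× such that A₁·A₂ ⊆ A₃⁻¹, A₂·A₃ ⊆ A₁⁻¹, and A₃·A₁ ⊆ A₂⁻¹. Then for any x, x', x'' ∈ A₁, we have x''x/x' ∈ A₁; consequently A₁ is a coset λH of a finite subgroup H of ℂ×. -/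
open Finset Pointwise

/-!
Fix `b ∈ A₂` and `x, y, z ∈ A₁`. Walking around the three inclusions gives
`(z b)⁻¹ ∈ A₃`, then `y⁻¹ z b ∈ A₂`, then `(x y⁻¹ z b)⁻¹ ∈ A₃`, and finally
`x y⁻¹ z ∈ A₁`; no commutativity is needed. A nonempty subset `A` of a group closed under
`(x, y, z) ↦ x y⁻¹ z` is a left coset `a H`, where `H = a⁻¹ A` is a subgroup for any `a ∈ A`.
-/

section Group

variable {G : Type*} [Group G]

theorem mul_inv_mul_mem_of_mul_subset_inv {A B C : Set G} {b : G} (hb : b ∈ B)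
    (hAB : A * B ⊆ C⁻¹) (hBC : B * C ⊆ A⁻¹) (hCA : C * A ⊆ B⁻¹)
    {x y z : G} (hx : x ∈ A) (hy : y ∈ A) (hz : z ∈ A) :
    x * y⁻¹ * z ∈ A := by
  have h₁ : (z * b)⁻¹ ∈ C := hAB (Set.mul_mem_mul hz hb)
  have h₂ : y⁻¹ * z * b ∈ B := by
    simpa [mul_assoc] using hCA (Set.mul_mem_mul h₁ hy)
  have h₃ : (x * (y⁻¹ * z * b))⁻¹ ∈ C := hAB (Set.mul_mem_mul hx h₂)
  simpa [mul_assoc] using hBC (Set.mul_mem_mul hb h₃)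

def Subgroup.ofMulInvMulClosed (A : Set G) {a : G} (ha : a ∈ A)
    (hA : ∀ x ∈ A, ∀ y ∈ A, ∀ z ∈ A, x * y⁻¹ * z ∈ A) : Subgroup G where
  carrier := a⁻¹ • A
  one_mem' := Set.mem_smul_set_iff_inv_smul_mem.mpr (by simpa using ha)
  mul_mem' {p q} hp hq := by
    rw [Set.mem_smul_set_iff_inv_smul_mem, inv_inv, smul_eq_mul] at *
    simpa [mul_assoc] using hA _ hp _ ha _ hq
  inv_mem' {p} hp := by
    rw [Set.mem_smul_set_iff_inv_smul_mem, inv_inv, smul_eq_mul] at *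
    simpa [mul_assoc] using hA _ ha _ hp _ ha

theorem Subgroup.smul_ofMulInvMulClosed (A : Set G) {a : G} (ha : a ∈ A)
    (hA : ∀ x ∈ A, ∀ y ∈ A, ∀ z ∈ A, x * y⁻¹ * z ∈ A) :
    a • (Subgroup.ofMulInvMulClosed A ha hA : Set G) = A :=
  smul_inv_smul a A

end Group

theorem triple_product_coset_general (A₁ A₂ A₃ : Finset ℂˣ)
    (hne₁ : A₁.Nonempty) (hne₂ : A₂.Nonempty)
    (h12 : A₁ * A₂ ⊆ A₃⁻¹) (h23 : A₂ * A₃ ⊆ A₁⁻¹) (h31 : A₃ * A₁ ⊆ A₂⁻¹) :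
    (∀ x ∈ A₁, ∀ x' ∈ A₁, ∀ x'' ∈ A₁, x'' * x / x' ∈ A₁) ∧
    ∃ (H : Subgroup ℂˣ) (l : ℂˣ), (H : Set ℂˣ).Finite ∧
      (A₁ : Set ℂˣ) = (fun h => l * h) '' (H : Set ℂˣ) := by
  obtain ⟨b, hb⟩ := hne₂
  have hA₁ : ∀ x ∈ (A₁ : Set ℂˣ), ∀ y ∈ (A₁ : Set ℂˣ), ∀ z ∈ (A₁ : Set ℂˣ),
      x * y⁻¹ * z ∈ (A₁ : Set ℂˣ) := fun _ hx _ hy _ hz =>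
    mul_inv_mul_mem_of_mul_subset_inv (C := A₃) (Finset.mem_coe.mpr hb)
      (by exact_mod_cast h12) (by exact_mod_cast h23) (by exact_mod_cast h31) hx hy hz
  refine ⟨fun x hx x' hx' x'' hx'' => ?_, ?_⟩
  · simpa [div_eq_mul_inv, mul_right_comm] using hA₁ x'' hx'' x' hx' x hx
  obtain ⟨a, ha⟩ := hne₁
  have hH := Subgroup.smul_ofMulInvMulClosed _ (Finset.mem_coe.mpr ha) hA₁
  exact ⟨_, a, Set.finite_smul_set.mp (hH ▸ A₁.finite_toSet), hH.symm⟩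

/-- If `A₁, A₂, A₃ ⊆ ℂ×` are nonempty finite sets with
`A₁·A₂ ⊆ A₃⁻¹`, `A₂·A₃ ⊆ A₁⁻¹`, `A₃·A₁ ⊆ A₂⁻¹`, then `x''x/x' ∈ A₁` for all
`x, x', x'' ∈ A₁`; consequently `A₁` is a coset `λH` of a finite subgroup
`H ≤ ℂ×`. -/
theorem triple_product_coset (A₁ A₂ A₃ : Finset ℂˣ)
    (hne₁ : A₁.Nonempty) (hne₂ : A₂.Nonempty) (hne₃ : A₃.Nonempty)
    (h12 : A₁ * A₂ ⊆ A₃⁻¹) (h23 : A₂ * A₃ ⊆ A₁⁻¹) (h31 : A₃ * A₁ ⊆ A₂⁻¹) :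
    (∀ x ∈ A₁, ∀ x' ∈ A₁, ∀ x'' ∈ A₁, x'' * x / x' ∈ A₁) ∧
    ∃ (H : Subgroup ℂˣ) (l : ℂˣ), (H : Set ℂˣ).Finite ∧
      (A₁ : Set ℂˣ) = (fun h => l * h) '' (H : Set ℂˣ) :=
  triple_product_coset_general A₁ A₂ A₃ hne₁ hne₂ h12 h23 h31
end

section
/- Let A₁, A₂, A₃ be nonempty finite subsets of ℂ× with A₁·A₂ ⊆ A₃⁻¹, A₂·A₃ ⊆ A₁⁻¹, and A₃·A₁ ⊆ A₂⁻¹, and suppose these inclusions are equalities of cardinality, i.e. |A₁| = |A₂| = |A₃|. Then there exist a finite subgroup H ≤ ℂ× and λ₁, λ₂, λ₃ ∈ ℂ× with λ₁λ₂λ₃ = 1 such that Aⱼ = λⱼH for j = 1, 2, 3. -/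
/-!
Since `|a A₂| = |A₃|`, every translate `a A₂` with `a ∈ A₁` already fills `A₃⁻¹`, so the three
inclusions are equalities and `a A₂ = A₃⁻¹`. In an abelian group this makes `K = A₁ A₂ A₃ = A₃⁻¹ A₃`
invariant under cyclic rotation, hence `K K = (A₁ A₂)⁻¹ (A₁ A₂) = K`: having no doubling and
containing `1`, `K` is a finite subgroup. Finally `a K = (a A₂)(A₃ A₁) = A₃⁻¹ A₂⁻¹ = A₁`, and
likewise for `A₂` and `A₃`, with translating elements `a`, `b`, `(a b)⁻¹`.
-/

open Finset Pointwise

namespace Finset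

section Group

variable {G : Type*} [Group G] [DecidableEq G] {A B C K : Finset G} {a : G}

lemma smul_finset_eq_of_mul_subset_of_card_le (ha : a ∈ A) (h : A * B ⊆ C) (hcard : #C ≤ #B) :
    a • B = C :=
  eq_of_subset_of_card_le ((smul_finset_subset_mul ha).trans h) (by rwa [card_smul_finset])

lemma mul_eq_of_subset_of_card_le (ha : a ∈ A) (h : A * B ⊆ C) (hcard : #C ≤ #B) :
    A * B = C :=
  h.antisymm <| (smul_finset_eq_of_mul_subset_of_card_le ha h hcard).symm.subset.trans
    (smul_finset_subset_mul ha)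

lemma coe_stabilizer_eq_of_mul_self_eq (hK : K * K = K) (h1 : (1 : G) ∈ K) :
    (MulAction.stabilizer G K : Set G) = K := by
  simpa using smul_stabilizer_of_no_doubling (by rw [hK]) h1

end Group

structure IsMulInvTriple {G : Type*} [CommGroup G] [DecidableEq G] (A B C : Finset G) : Prop where
  mul_eq_inv₁ : A * B = C⁻¹
  mul_eq_inv₂ : B * C = A⁻¹
  mul_eq_inv₃ : C * A = B⁻¹

namespace IsMulInvTriple

variable {G : Type*} [CommGroup G] [DecidableEq G] {A B C : Finset G} {a : G}

lemma rotate (h : IsMulInvTriple A B C) : IsMulInvTriple B C A :=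
  ⟨h.mul_eq_inv₂, h.mul_eq_inv₃, h.mul_eq_inv₁⟩

lemma mul_mul_eq_inv_mul_right (h : IsMulInvTriple A B C) : A * B * C = C⁻¹ * C := by
  rw [h.mul_eq_inv₁]

lemma mul_mul_eq_inv_mul_left (h : IsMulInvTriple A B C) : A * B * C = A⁻¹ * A :=
  (mul_rotate A B C).trans h.rotate.mul_mul_eq_inv_mul_right

lemma mul_mul_eq_inv_mul_middle (h : IsMulInvTriple A B C) : A * B * C = B⁻¹ * B :=
  (mul_rotate A B C).trans h.rotate.mul_mul_eq_inv_mul_left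

lemma mul_mul_mul_self (h : IsMulInvTriple A B C) : A * B * C * (A * B * C) = A * B * C :=
  calc A * B * C * (A * B * C) = A⁻¹ * A * (B⁻¹ * B) := by
        rw [← h.mul_mul_eq_inv_mul_left, ← h.mul_mul_eq_inv_mul_middle]
    _ = (A * B)⁻¹ * (A * B) := by rw [mul_inv, mul_mul_mul_comm]
    _ = A * B * C := by rw [h.mul_eq_inv₁, inv_inv, mul_comm]

lemma one_mem_mul_mul (h : IsMulInvTriple A B C) (hA : A.Nonempty) : (1 : G) ∈ A * B * C := by
  obtain ⟨a, ha⟩ := hA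
  rw [h.mul_mul_eq_inv_mul_left, ← inv_mul_cancel a]
  exact mul_mem_mul (inv_mem_inv ha) ha

lemma exists_subgroup_coe_eq_mul_mul (h : IsMulInvTriple A B C) (hA : A.Nonempty) :
    ∃ H : Subgroup G, (H : Set G) = ↑(A * B * C) :=
  ⟨_, coe_stabilizer_eq_of_mul_self_eq h.mul_mul_mul_self (h.one_mem_mul_mul hA)⟩

lemma smul_mul_mul_eq (h : IsMulInvTriple A B C) (haB : a • B = C⁻¹) : a • (A * B * C) = A :=
  calc a • (A * B * C) = a • B * (C * A) := by rw [mul_rotate, mul_assoc, smul_mul_assoc]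
    _ = A := by rw [haB, h.mul_eq_inv₃, ← mul_inv, mul_comm, h.mul_eq_inv₂, inv_inv]

end IsMulInvTriple

end Finset

theorem triple_product_cosets_common_subgroup_general (A₁ A₂ A₃ : Finset ℂˣ)
    (hne₁ : A₁.Nonempty) (hne₂ : A₂.Nonempty)
    (h12 : A₁ * A₂ ⊆ A₃⁻¹) (h23 : A₂ * A₃ ⊆ A₁⁻¹) (h31 : A₃ * A₁ ⊆ A₂⁻¹)
    (hcard₁₂ : A₁.card = A₂.card) (hcard₂₃ : A₂.card = A₃.card) :
    ∃ (H : Subgroup ℂˣ) (l₁ l₂ l₃ : ℂˣ), (H : Set ℂˣ).Finite ∧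
      l₁ * l₂ * l₃ = 1 ∧
      (A₁ : Set ℂˣ) = (fun h => l₁ * h) '' (H : Set ℂˣ) ∧
      (A₂ : Set ℂˣ) = (fun h => l₂ * h) '' (H : Set ℂˣ) ∧
      (A₃ : Set ℂˣ) = (fun h => l₃ * h) '' (H : Set ℂˣ) := by
  obtain ⟨a, ha⟩ := hne₁
  obtain ⟨b, hb⟩ := hne₂
  have hc : (a * b)⁻¹ ∈ A₃ := by simpa using h12 (mul_mem_mul ha hb)
  have hle₁ : #A₃⁻¹ ≤ #A₂ := by rw [card_inv, hcard₂₃]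
  have hle₂ : #A₁⁻¹ ≤ #A₃ := by rw [card_inv, hcard₁₂, hcard₂₃]
  have hle₃ : #A₂⁻¹ ≤ #A₁ := by rw [card_inv, hcard₁₂]
  have T : IsMulInvTriple A₁ A₂ A₃ :=
    ⟨mul_eq_of_subset_of_card_le ha h12 hle₁, mul_eq_of_subset_of_card_le hb h23 hle₂,
      mul_eq_of_subset_of_card_le hc h31 hle₃⟩
  obtain ⟨H, hH⟩ := T.exists_subgroup_coe_eq_mul_mul ⟨a, ha⟩
  have coset {A : Finset ℂˣ} {l : ℂˣ} (hA : l • (A₁ * A₂ * A₃) = A) :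
      (A : Set ℂˣ) = (fun h => l * h) '' (H : Set ℂˣ) := by
    rw [← hA, coe_smul_finset, hH, ← Set.image_smul]
    rfl
  refine ⟨H, a, b, (a * b)⁻¹, hH ▸ finite_toSet _, mul_inv_cancel _, coset ?_, coset ?_, coset ?_⟩
  · exact T.smul_mul_mul_eq (smul_finset_eq_of_mul_subset_of_card_le ha h12 hle₁)
  · rw [mul_rotate]
    exact T.rotate.smul_mul_mul_eq (smul_finset_eq_of_mul_subset_of_card_le hb h23 hle₂)
  · rw [← mul_rotate]
    exact T.rotate.rotate.smul_mul_mul_eq (smul_finset_eq_of_mul_subset_of_card_le hc h31 hle₃)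

/-- If `A₁, A₂, A₃ ⊆ ℂ×` are nonempty finite sets with
`A₁·A₂ ⊆ A₃⁻¹`, `A₂·A₃ ⊆ A₁⁻¹`, `A₃·A₁ ⊆ A₂⁻¹` and `|A₁| = |A₂| = |A₃|`, then
there are a finite subgroup `H ≤ ℂ×` and `λ₁, λ₂, λ₃ ∈ ℂ×` with
`λ₁λ₂λ₃ = 1` and `Aⱼ = λⱼ H` for each `j`. -/
theorem triple_product_cosets_common_subgroup (A₁ A₂ A₃ : Finset ℂˣ)
    (hne₁ : A₁.Nonempty) (hne₂ : A₂.Nonempty) (hne₃ : A₃.Nonempty)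
    (h12 : A₁ * A₂ ⊆ A₃⁻¹) (h23 : A₂ * A₃ ⊆ A₁⁻¹) (h31 : A₃ * A₁ ⊆ A₂⁻¹)
    (hcard₁₂ : A₁.card = A₂.card) (hcard₂₃ : A₂.card = A₃.card) :
    ∃ (H : Subgroup ℂˣ) (l₁ l₂ l₃ : ℂˣ), (H : Set ℂˣ).Finite ∧
      l₁ * l₂ * l₃ = 1 ∧
      (A₁ : Set ℂˣ) = (fun h => l₁ * h) '' (H : Set ℂˣ) ∧
      (A₂ : Set ℂˣ) = (fun h => l₂ * h) '' (H : Set ℂˣ) ∧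
      (A₃ : Set ℂˣ) = (fun h => l₃ * h) '' (H : Set ℂˣ) :=
  triple_product_cosets_common_subgroup_general A₁ A₂ A₃ hne₁ hne₂ h12 h23 h31 hcard₁₂ hcard₂₃
end
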